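/- arXiv:1008.5076 — 2 statements merged into one kernel-verified Lean document; each statement's English description precedes it below -/
import Mathlib

section
/- Let T be a curvature-like tensor on a real vector space V (dim V ≥ 3) equipped with a nondegenerate symmetric bilinear form g of indefinite signature. If T(x,y,y,x)=0 for every pair of vectors x, y spanning a weakly degenerate 2-plane, then T = c·π₁ for some real constant c, where π₁(z,u,v,w) = g(z,w)g(u,v) − g(z,v)g(u,w). -/
/-!
If `n` is null and `x ⊥ n` with `g x x ≠ 0`, then `x, n` span a weakly degenerate plane, so
`T(n,x,x,n) = 0`; such `x` are Zariski dense in `n^⊥`, so this holds for every `x ⊥ n`.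
Moving `n` along the null curve `n + t q - (t² g(q,q) / 2) m`, where `m` is a null partner of `n`,
and differentiating at `t = 0` kills the mixed terms, so `T(n,x,x,n) = c_n g(n,x)²`; comparing
`T(p,q,q,p) = T(q,p,p,q)` shows that `c_n = c` does not depend on `n`. For fixed `y`, the quadratic
form `v ↦ T(v,y,y,v) - c g(v,y)²` then vanishes on the null cone of the indefinite form `g`, hence
is a multiple of `g`. This identifies the sectional form of `T` with that of `-c π₁`, and a
curvature-like tensor is determined by its sectional form.
-/

open Polynomial in
theorem Polynomial.eq_zero_of_forall_eval_ne_zero_imp {K : Type*} [Field K] [Infinite K]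
    {p s : K[X]} (hs : s ≠ 0) (h : ∀ t, s.eval t ≠ 0 → p.eval t = 0) : p = 0 := by
  have hsp : s * p = 0 := Polynomial.funext fun t => by
    by_cases ht : s.eval t = 0 <;> simp [ht, h]
  exact (mul_eq_zero.mp hsp).resolve_left hs

theorem exists_ne_roots_of_pos_of_neg {a₀ a₁ a₂ : ℝ} (h₀ : 0 < a₀) (h₂ : a₂ < 0) :
    ∃ t₁ t₂ : ℝ, t₁ ≠ t₂ ∧ a₀ + a₁ * t₁ + a₂ * t₁ ^ 2 = 0 ∧ a₀ + a₁ * t₂ + a₂ * t₂ ^ 2 = 0 := by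
  set s := √(discrim a₂ a₁ a₀)
  have hD : 0 < discrim a₂ a₁ a₀ := by unfold discrim; nlinarith [sq_nonneg a₁]
  have hs : discrim a₂ a₁ a₀ = s * s := (Real.mul_self_sqrt hD.le).symm
  have hroot := fun t => quadratic_eq_zero_iff h₂.ne hs t
  refine ⟨(-a₁ + s) / (2 * a₂), (-a₁ - s) / (2 * a₂), ?_, ?_, ?_⟩
  · have hspos : 0 < s := Real.sqrt_pos.mpr hD
    rw [Ne, div_left_inj' (mul_ne_zero two_ne_zero h₂.ne)]
    linarith
  · linear_combination (hroot _).mpr (Or.inl rfl)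
  · linear_combination (hroot _).mpr (Or.inr rfl)

theorem mul_eq_mul_of_forall_root_imp_root {a₀ a₁ a₂ b₀ b₁ b₂ : ℝ} (h₀ : 0 < a₀) (h₂ : a₂ < 0)
    (h : ∀ t, a₀ + a₁ * t + a₂ * t ^ 2 = 0 → b₀ + b₁ * t + b₂ * t ^ 2 = 0) :
    b₀ * a₂ = b₂ * a₀ := by
  obtain ⟨t₁, t₂, hne, ha₁, ha₂⟩ := exists_ne_roots_of_pos_of_neg (a₁ := a₁) h₀ h₂
  have hb₁ := h t₁ ha₁
  have hb₂ := h t₂ ha₂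
  -- `a₂ b - b₂ a` has degree at most one and vanishes at `t₁ ≠ t₂`
  have hlin : (a₂ * b₁ - b₂ * a₁) * (t₁ - t₂) = 0 := by
    linear_combination a₂ * hb₁ - b₂ * ha₁ - a₂ * hb₂ + b₂ * ha₂
  have hc : a₂ * b₁ - b₂ * a₁ = 0 := (mul_eq_zero.mp hlin).resolve_right (sub_ne_zero.mpr hne)
  linear_combination a₂ * hb₁ - b₂ * ha₁ - t₁ * hc

namespace QuadraticMap

section Field

variable {K V : Type*} [Field K] [AddCommGroup V] [Module K V]

theorem map_add_smul (Q : QuadraticMap K V K) (v z : V) (t : K) :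
    Q (v + t • z) = Q v + polar Q v z * t + Q z * t ^ 2 := by
  rw [QuadraticMap.map_add Q, QuadraticMap.map_smul, polar_smul_right, smul_eq_mul, smul_eq_mul]
  ring

open Polynomial in
theorem apply_eq_zero_of_forall_ne_zero_imp [Infinite K] {Q P : QuadraticMap K V K}
    {W : Submodule K V} {z : V} (hzW : z ∈ W) (hz : Q z ≠ 0)
    (h : ∀ v ∈ W, Q v ≠ 0 → P v = 0) {v : V} (hv : v ∈ W) : P v = 0 := by
  have hpoly := Polynomial.eq_zero_of_forall_eval_ne_zero_imp
    (p := C (P v) + C (polar P v z) * X + C (P z) * X ^ 2)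
    (s := C (Q v) + C (polar Q v z) * X + C (Q z) * X ^ 2)
    (fun h0 => hz (by simpa using congrArg (coeff · 2) h0))
    (fun t ht => by
      simp only [eval_add, eval_mul, eval_C, eval_X, eval_pow, ← map_add_smul] at ht ⊢
      exact h _ (W.add_mem hv (W.smul_mem t hzW)) ht)
  simpa using congrArg (eval 0) hpoly

end Field

variable {V : Type*} [AddCommGroup V] [Module ℝ V] {Q P : QuadraticMap ℝ V ℝ}

theorem mul_eq_mul_of_forall_eq_zero_imp (h : ∀ v, Q v = 0 → P v = 0) {u w : V}
    (hu : 0 < Q u) (hw : Q w < 0) : P u * Q w = P w * Q u :=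
  mul_eq_mul_of_forall_root_imp_root hu hw fun t ht => by
    rw [← map_add_smul] at ht ⊢
    exact h _ ht

theorem exists_eq_mul_of_forall_eq_zero_imp (h : ∀ v, Q v = 0 → P v = 0) {u w : V}
    (hu : 0 < Q u) (hw : Q w < 0) : ∃ c : ℝ, ∀ v, P v = c * Q v := by
  refine ⟨P w / Q w, fun v => ?_⟩
  rw [div_mul_eq_mul_div, eq_div_iff hw.ne]
  rcases lt_trichotomy (Q v) 0 with hv | hv | hv
  · apply mul_left_cancel₀ hu.ne'
    linear_combination Q v * mul_eq_mul_of_forall_eq_zero_imp h hu hw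
      - Q w * mul_eq_mul_of_forall_eq_zero_imp h hu hv
  · simp [hv, h v hv]
  · exact mul_eq_mul_of_forall_eq_zero_imp h hv hw

end QuadraticMap

namespace LinearMap.BilinForm

section Field

variable {K V : Type*} [Field K] [AddCommGroup V] [Module K V]

def SpansWeaklyDegeneratePlane (g : LinearMap.BilinForm K V) (x y : V) : Prop :=
  LinearIndependent K ![x, y] ∧
    (g.compl₁₂ (Submodule.span K {x, y}).subtype (Submodule.span K {x, y}).subtype).rank = 1

theorem spansWeaklyDegeneratePlane_of_isotropic {g : LinearMap.BilinForm K V} {x n : V}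
    (hn : g n n = 0) (hn₀ : n ≠ 0) (hnx : g n x = 0) (hx : g x x ≠ 0) :
    g.SpansWeaklyDegeneratePlane x n := by
  refine ⟨LinearIndependent.pair_iff.mpr fun s t hst => ?_, ?_⟩
  · have hs : s = 0 := by simpa [hnx, hx] using congrArg (g · x) hst
    subst hs
    exact ⟨rfl, by simpa [hn₀] using hst⟩
  set p := Submodule.span K ({x, n} : Set V)
  set B := g.compl₁₂ p.subtype p.subtype
  have hxp : x ∈ p := Submodule.subset_span (Set.mem_insert _ _)
  have hnp : n ∈ p := Submodule.subset_span (Set.mem_insert_of_mem _ rfl)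
  have hBx : B ⟨x, hxp⟩ ≠ 0 := fun h => hx (LinearMap.congr_fun h ⟨x, hxp⟩)
  have hBn : B ⟨n, hnp⟩ = 0 := by
    ext ⟨u, hu⟩
    obtain ⟨s, t, rfl⟩ := Submodule.mem_span_pair.mp hu
    simp [B, hn, hnx]
  have hrange : B.range = K ∙ B ⟨x, hxp⟩ := by
    refine le_antisymm ?_ (Submodule.span_le.mpr (by simp))
    rintro _ ⟨⟨v, hv⟩, rfl⟩
    obtain ⟨s, t, rfl⟩ := Submodule.mem_span_pair.mp hv
    have : (⟨s • x + t • n, hv⟩ : p) = s • ⟨x, hxp⟩ + t • ⟨n, hnp⟩ := rfl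
    rw [this, map_add, map_smul, map_smul, hBn, smul_zero, add_zero]
    exact Submodule.smul_mem _ _ (Submodule.mem_span_singleton_self _)
  rw [LinearMap.rank, hrange, ← Module.finrank_eq_rank, finrank_span_singleton hBx, Nat.cast_one]

end Field

variable {V : Type*} [AddCommGroup V] [Module ℝ V] {g : LinearMap.BilinForm ℝ V}

theorem exists_isotropic_ne_zero {u w : V} (hu : 0 < g u u) (hw : g w w < 0) :
    ∃ n, g n n = 0 ∧ n ≠ 0 := by
  obtain ⟨t, -, -, ht, -⟩ :=
    exists_ne_roots_of_pos_of_neg (a₁ := QuadraticMap.polar g.toQuadraticMap u w) hu hw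
  refine ⟨u + t • w, (QuadraticMap.map_add_smul g.toQuadraticMap u w t).trans ht, fun h => ?_⟩
  rw [add_eq_zero_iff_eq_neg.mp h] at hu
  simp only [map_neg, map_smul, LinearMap.neg_apply, LinearMap.smul_apply, smul_eq_mul] at hu
  nlinarith

theorem exists_isotropic_add_smul (hg : g.IsSymm) {p v : V} (hp : g p p = 0)
    (hpv : g p v ≠ 0) : ∃ a : ℝ, g (v + a • p) (v + a • p) = 0 := by
  refine ⟨-(g v v / (2 * g p v)), ?_⟩
  simp only [map_add, map_smul, LinearMap.add_apply, LinearMap.smul_apply, smul_eq_mul, hp,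
    hg.eq v p]
  field_simp
  ring

theorem exists_isotropic_partner (hg : g.IsSymm) (hnd : g.SeparatingLeft) {n : V}
    (hn : g n n = 0) (hn₀ : n ≠ 0) : ∃ m, g m m = 0 ∧ g n m = 1 := by
  obtain ⟨v, hv⟩ : ∃ v, g n v ≠ 0 := by
    by_contra! h
    exact hn₀ (hnd n h)
  obtain ⟨a, ha⟩ := exists_isotropic_add_smul hg hn hv
  have hnr : g n (v + a • n) = g n v := by simp [hn]
  refine ⟨(g n v)⁻¹ • (v + a • n), ?_, ?_⟩
  · simp only [map_smul, LinearMap.smul_apply, ha, smul_zero]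
  · rw [map_smul, smul_eq_mul, hnr, inv_mul_cancel₀ hv]

theorem exists_isotropic_not_orthogonal (hg : g.IsSymm) (hnd : g.SeparatingLeft) {p q : V}
    (hp : g p p = 0) (hp₀ : p ≠ 0) (hq₀ : q ≠ 0) (hqp : g q p = 0) :
    ∃ r, g r r = 0 ∧ g p r ≠ 0 ∧ g q r ≠ 0 := by
  have hsep : ∀ {x : V}, x ≠ 0 → ∃ v, g x v ≠ 0 := fun hx => by
    by_contra! h
    exact hx (hnd _ h)
  obtain ⟨v, hpv, hqv⟩ : ∃ v, g p v ≠ 0 ∧ g q v ≠ 0 := by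
    obtain ⟨v₁, h₁⟩ := hsep hp₀
    obtain ⟨v₂, h₂⟩ := hsep hq₀
    by_cases hq₁ : g q v₁ = 0
    · by_cases hp₂ : g p v₂ = 0
      · exact ⟨v₁ + v₂, by simpa [hp₂], by simpa [hq₁]⟩
      · exact ⟨v₂, hp₂, h₂⟩
    · exact ⟨v₁, h₁, hq₁⟩
  obtain ⟨a, ha⟩ := exists_isotropic_add_smul hg hp hpv
  exact ⟨v + a • p, ha, by simpa [hp], by simpa [hqp]⟩

theorem exists_anisotropic_orthogonal [FiniteDimensional ℝ V] (hdim : 3 ≤ Module.finrank ℝ V)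
    (hg : g.IsSymm) (hnd : g.SeparatingLeft) {n m : V} (hn : g n n = 0) (hm : g m m = 0)
    (hnm : g n m = 1) : ∃ z, g n z = 0 ∧ g m z = 0 ∧ g z z ≠ 0 := by
  obtain ⟨w, ⟨hnw, hmw⟩, hw₀⟩ : ∃ w ∈ (g n).ker ⊓ (g m).ker, w ≠ 0 := by
    rw [← LinearMap.ker_prod]
    exact Submodule.exists_mem_ne_zero_of_ne_bot
      (LinearMap.ker_ne_bot_of_finrank_lt (by simp; omega))
  simp only [SetLike.mem_coe, LinearMap.mem_ker] at hnw hmw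
  obtain ⟨v, hv⟩ : ∃ v, g w v ≠ 0 := by
    by_contra! h
    exact hw₀ (hnd w h)
  set v₀ := v - g m v • n - g n v • m
  have hnv₀ : g n v₀ = 0 := by simp [v₀, hn, hnm]
  have hmv₀ : g m v₀ = 0 := by simp [v₀, hm, hg.eq m n, hnm]
  have hwv₀ : g w v₀ ≠ 0 := by simpa [v₀, hg.eq w n, hg.eq w m, hnw, hmw]
  by_contra! h
  have := h (w + v₀) (by simp [hnw, hnv₀]) (by simp [hmw, hmv₀])
  simp only [map_add, LinearMap.add_apply, h w hnw hmw, h v₀ hnv₀ hmv₀, hg.eq v₀ w] at this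
  exact hwv₀ (by linarith)

end LinearMap.BilinForm

section Curvature

variable {V : Type*} [AddCommGroup V] [Module ℝ V]

structure IsCurvatureLike (T : V →ₗ[ℝ] V →ₗ[ℝ] V →ₗ[ℝ] V →ₗ[ℝ] ℝ) : Prop where
  antisymm_left : ∀ x y z u, T x y z u = -T y x z u
  bianchi : ∀ x y z u, T x y z u + T y z x u + T z x y u = 0
  antisymm_right : ∀ x y z u, T x y z u = -T x y u z

def jacobiForm (T : V →ₗ[ℝ] V →ₗ[ℝ] V →ₗ[ℝ] V →ₗ[ℝ] ℝ) (x : V) : QuadraticForm ℝ V :=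
  LinearMap.BilinMap.toQuadraticMap ((T.flip x).flip x)

theorem jacobiForm_apply (T : V →ₗ[ℝ] V →ₗ[ℝ] V →ₗ[ℝ] V →ₗ[ℝ] ℝ) (x v : V) :
    jacobiForm T x v = T v x x v :=
  rfl

namespace IsCurvatureLike

open LinearMap.BilinForm

variable {T : V →ₗ[ℝ] V →ₗ[ℝ] V →ₗ[ℝ] V →ₗ[ℝ] ℝ} {g : LinearMap.BilinForm ℝ V}

theorem apply_self_left (hT : IsCurvatureLike T) (x z u : V) : T x x z u = 0 := by
  linarith [hT.antisymm_left x x z u]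

theorem apply_self_right (hT : IsCurvatureLike T) (x y z : V) : T x y z z = 0 := by
  linarith [hT.antisymm_right x y z z]

theorem pair_symm (hT : IsCurvatureLike T) (x y z u : V) : T x y z u = T z u x y := by
  linarith [hT.bianchi x y z u, hT.bianchi y z u x, hT.bianchi z u x y, hT.bianchi u x y z,
    hT.antisymm_left z x y u, hT.antisymm_right y z u x, hT.antisymm_right z u y x,
    hT.antisymm_left u y z x, hT.antisymm_right y u z x, hT.antisymm_left u x z y,
    hT.antisymm_right x u z y, hT.antisymm_right x z u y, hT.antisymm_left u x y z,
    hT.antisymm_right x y u z]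

theorem swap_middle (hT : IsCurvatureLike T) (n x y : V) : T n x y n = T n y x n := by
  rw [hT.pair_symm, hT.antisymm_left, hT.antisymm_right, neg_neg]

theorem eq_of_sectional (hT : IsCurvatureLike T) (hg : g.IsSymm) {c : ℝ}
    (h : ∀ x y, T x y y x = c * (g x x * g y y - g x y * g y x)) (z u v w : V) :
    T z u v w = c * (g z w * g u v - g z v * g u w) := by
  have hpol : ∀ x y z, T x y y z = c * (g x z * g y y - g x y * g y z) := by
    intro x y z
    have := h (x + z) y
    simp only [map_add, LinearMap.add_apply] at this
    linear_combination (this - h x y - h z y - hT.pair_symm z y y x - hT.antisymm_left y x z y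
      + hT.antisymm_right x y z y + c * g y y * hg.eq z x + c * g y z * hg.eq x y
      - c * g y x * hg.eq z y) / 2
  have hpol₂ : ∀ x y w z, T x y w z + T x w y z
      = c * (g x z * g y w - g x w * g y z + g x z * g w y - g x y * g w z) := by
    intro x y w z
    have := hpol x (y + w) z
    simp only [map_add, LinearMap.add_apply] at this
    linear_combination this - hpol x y z - hpol x w z
  linear_combination (hT.bianchi z u v w - hT.antisymm_left u v z w + hpol₂ v u z w
    - 2 * hT.antisymm_left v z u w + 2 * hpol₂ z u v w
    + c * (g v w * hg.eq u z + g u w * hg.eq z v + g z w * hg.eq v u)) / 3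

theorem apply_isotropic_eq_zero_of_anisotropic (hT : IsCurvatureLike T)
    (hvan : ∀ x y, g.SpansWeaklyDegeneratePlane x y → T x y y x = 0) {n x : V}
    (hn : g n n = 0) (hnx : g n x = 0) (hx : g x x ≠ 0) : T n x x n = 0 := by
  rcases eq_or_ne n 0 with rfl | hn₀
  · simp
  rw [hT.pair_symm]
  exact hvan x n (spansWeaklyDegeneratePlane_of_isotropic hn hn₀ hnx hx)

theorem apply_isotropic_eq_zero_of_orthogonal [FiniteDimensional ℝ V] (hT : IsCurvatureLike T)
    (hdim : 3 ≤ Module.finrank ℝ V) (hg : g.IsSymm) (hnd : g.SeparatingLeft)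
    (hvan : ∀ x y, g.SpansWeaklyDegeneratePlane x y → T x y y x = 0) {n x : V}
    (hn : g n n = 0) (hnx : g n x = 0) : T n x x n = 0 := by
  rcases eq_or_ne n 0 with rfl | hn₀
  · simp
  obtain ⟨m, hm, hnm⟩ := exists_isotropic_partner hg hnd hn hn₀
  obtain ⟨z, hnz, -, hz⟩ := exists_anisotropic_orthogonal hdim hg hnd hn hm hnm
  rw [hT.pair_symm, ← jacobiForm_apply]
  refine QuadraticMap.apply_eq_zero_of_forall_ne_zero_imp (Q := g.toQuadraticMap)
    (W := (g n).ker) hnz hz (fun v hv hvv => ?_) hnx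
  rw [jacobiForm_apply, hT.pair_symm]
  exact hT.apply_isotropic_eq_zero_of_anisotropic hvan hn hv hvv

theorem apply_hyperbolic_eq_zero_of_anisotropic [FiniteDimensional ℝ V] (hT : IsCurvatureLike T)
    (hdim : 3 ≤ Module.finrank ℝ V) (hg : g.IsSymm) (hnd : g.SeparatingLeft)
    (hvan : ∀ x y, g.SpansWeaklyDegeneratePlane x y → T x y y x = 0) {n m q : V}
    (hn : g n n = 0) (hm : g m m = 0) (hnm : g n m = 1) (hnq : g n q = 0) (hmq : g m q = 0)
    (hq : g q q ≠ 0) : T n m q n = 0 := by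
  have hmn : g m n = 1 := by rw [hg.eq, hnm]
  -- `n + t q - (t² g(q,q) / 2) m` is a null curve through `n` with velocity `q`, orthogonal to
  -- `q - t g(q,q) m` (written with `+ (-a) •`, as `simp` cannot use `map_sub` for `T`)
  have key : ∀ t : ℝ, T (n + t • q + (-(t ^ 2 * g q q / 2)) • m) (q + (-(t * g q q)) • m)
      (q + (-(t * g q q)) • m) (n + t • q + (-(t ^ 2 * g q q / 2)) • m) = 0 := fun t =>
    hT.apply_isotropic_eq_zero_of_orthogonal hdim hg hnd hvan
      (by simp [hn, hm, hnm, hmn, hnq, hmq, hg.eq q n, hg.eq q m]; ring)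
      (by simp [hm, hnm, hnq, hmq, hg.eq q m])
  have h₁ := key 1
  have h₂ := key (-1)
  have h₃ := key 2
  have h₄ := key (-2)
  have h₅ := key 3
  have h₆ := key (-3)
  simp only [map_add, map_smul, LinearMap.add_apply, LinearMap.smul_apply, smul_eq_mul,
    hT.apply_self_left, hT.apply_self_right] at h₁ h₂ h₃ h₄ h₅ h₆
  -- the left side `f t` of `key t` is a polynomial of degree `6` in `t`, so
  -- `(45 (f 1 - f (-1)) - 9 (f 2 - f (-2)) + f 3 - f (-3)) / 60` is `f' 0 = -2 g(q,q) T(n,m,q,n)`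
  have : g q q * T n m q n = 0 := by
    linear_combination (-(45 * (h₁ - h₂) - 9 * (h₃ - h₄) + (h₅ - h₆)) / 120)
      - g q q * hT.swap_middle n q m / 2
  exact (mul_eq_zero.mp this).resolve_left hq

theorem apply_hyperbolic_eq_zero_of_orthogonal [FiniteDimensional ℝ V] (hT : IsCurvatureLike T)
    (hdim : 3 ≤ Module.finrank ℝ V) (hg : g.IsSymm) (hnd : g.SeparatingLeft)
    (hvan : ∀ x y, g.SpansWeaklyDegeneratePlane x y → T x y y x = 0) {n m q : V}
    (hn : g n n = 0) (hm : g m m = 0) (hnm : g n m = 1) (hnq : g n q = 0) :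
    T n m q n = 0 := by
  set ℓ := (T n m).flip n
  have hW : ∀ v ∈ (g n).ker ⊓ (g m).ker, ℓ v * ℓ v = 0 := by
    obtain ⟨z, hnz, hmz, hz⟩ := exists_anisotropic_orthogonal hdim hg hnd hn hm hnm
    intro v hv
    refine QuadraticMap.apply_eq_zero_of_forall_ne_zero_imp (Q := g.toQuadraticMap)
      (P := QuadraticMap.linMulLin ℓ ℓ) (Submodule.mem_inf.mpr ⟨hnz, hmz⟩) hz
      (fun y hy hyy => ?_) hv
    obtain ⟨hny, hmy⟩ := Submodule.mem_inf.mp hy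
    simp [ℓ, hT.apply_hyperbolic_eq_zero_of_anisotropic hdim hg hnd hvan hn hm hnm hny hmy hyy]
  have hq₀ : q - g m q • n ∈ (g n).ker ⊓ (g m).ker := by
    simp [hn, hnq, hg.eq m n, hnm]
  simpa [ℓ, hT.apply_self_right] using mul_self_eq_zero.mp (hW _ hq₀)

theorem apply_isotropic_eq_mul_sq [FiniteDimensional ℝ V] (hT : IsCurvatureLike T)
    (hdim : 3 ≤ Module.finrank ℝ V) (hg : g.IsSymm) (hnd : g.SeparatingLeft)
    (hvan : ∀ x y, g.SpansWeaklyDegeneratePlane x y → T x y y x = 0) {n m : V}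
    (hn : g n n = 0) (hm : g m m = 0) (hnm : g n m = 1) (x : V) :
    T n x x n = T n m m n * g n x ^ 2 := by
  obtain ⟨x, a, hnx, rfl⟩ : ∃ x₀ a, g n x₀ = 0 ∧ x = x₀ + a • m :=
    ⟨x - g n x • m, g n x, by simp [hnm], by simp⟩
  have h₀ := hT.apply_isotropic_eq_zero_of_orthogonal hdim hg hnd hvan hn hnx
  have h₁ := hT.apply_hyperbolic_eq_zero_of_orthogonal hdim hg hnd hvan hn hm hnm hnx
  simp only [map_add, map_smul, LinearMap.add_apply, LinearMap.smul_apply, smul_eq_mul, hnx, hnm]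
  linear_combination h₀ + 2 * a * h₁ + a * hT.swap_middle n x m

theorem exists_isotropic_apply_eq_mul_sq [FiniteDimensional ℝ V] (hT : IsCurvatureLike T)
    (hdim : 3 ≤ Module.finrank ℝ V) (hg : g.IsSymm) (hnd : g.SeparatingLeft)
    (hvan : ∀ x y, g.SpansWeaklyDegeneratePlane x y → T x y y x = 0) {n : V}
    (hn : g n n = 0) : ∃ c, ∀ x, T n x x n = c * g n x ^ 2 := by
  rcases eq_or_ne n 0 with rfl | hn₀
  · exact ⟨0, by simp⟩
  obtain ⟨m, hm, hnm⟩ := exists_isotropic_partner hg hnd hn hn₀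
  exact ⟨_, hT.apply_isotropic_eq_mul_sq hdim hg hnd hvan hn hm hnm⟩

theorem eq_of_isotropic_apply_eq_mul_sq (hT : IsCurvatureLike T) (hg : g.IsSymm)
    {p q : V} {a b : ℝ} (hp : ∀ x, T p x x p = a * g p x ^ 2)
    (hq : ∀ x, T q x x q = b * g q x ^ 2) (hpq : g p q ≠ 0) : a = b := by
  have h := hT.pair_symm p q q p
  rw [hp, hq, hg.eq q p] at h
  exact mul_right_cancel₀ (pow_ne_zero 2 hpq) h

theorem exists_forall_isotropic_apply_eq_mul_sq [FiniteDimensional ℝ V] (hT : IsCurvatureLike T)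
    (hdim : 3 ≤ Module.finrank ℝ V) (hg : g.IsSymm) (hnd : g.SeparatingLeft)
    (hvan : ∀ x y, g.SpansWeaklyDegeneratePlane x y → T x y y x = 0) {u w : V}
    (hu : 0 < g u u) (hw : g w w < 0) :
    ∃ c, ∀ n, g n n = 0 → ∀ x, T n x x n = c * g n x ^ 2 := by
  obtain ⟨n₀, hn₀, hn₀ne⟩ := exists_isotropic_ne_zero hu hw
  obtain ⟨c, hc⟩ := hT.exists_isotropic_apply_eq_mul_sq hdim hg hnd hvan hn₀
  refine ⟨c, fun n hn => ?_⟩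
  rcases eq_or_ne n 0 with rfl | hne
  · simp
  obtain ⟨b, hb⟩ := hT.exists_isotropic_apply_eq_mul_sq hdim hg hnd hvan hn
  suffices c = b by rwa [this]
  by_cases h : g n₀ n = 0
  · obtain ⟨r, hr, hn₀r, hnr⟩ :=
      exists_isotropic_not_orthogonal hg hnd hn₀ hn₀ne hne (by rwa [hg.eq])
    obtain ⟨a, ha⟩ := hT.exists_isotropic_apply_eq_mul_sq hdim hg hnd hvan hr
    rw [hT.eq_of_isotropic_apply_eq_mul_sq hg hc ha hn₀r,
      hT.eq_of_isotropic_apply_eq_mul_sq hg hb ha hnr]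
  · exact hT.eq_of_isotropic_apply_eq_mul_sq hg hc hb h

theorem sectional_eq_of_isotropic (hT : IsCurvatureLike T) (hg : g.IsSymm)
    {u w : V} (hu : 0 < g u u) (hw : g w w < 0) {c : ℝ}
    (h : ∀ n, g n n = 0 → ∀ x, T n x x n = c * g n x ^ 2) (x y : V) :
    T x y y x = -c * (g x x * g y y - g x y * g y x) := by
  set P := jacobiForm T y - c • QuadraticMap.linMulLin (g.flip y) (g.flip y)
  have hP : ∀ v, P v = T v y y v - c * g v y ^ 2 := fun v => by
    simp [P, jacobiForm_apply, sq]
  obtain ⟨k, hk⟩ := QuadraticMap.exists_eq_mul_of_forall_eq_zero_imp (Q := g.toQuadraticMap)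
    (P := P) (fun v hv => by rw [hP, h v hv, sub_self]) hu hw
  simp only [hP, LinearMap.BilinMap.toQuadraticMap_apply] at hk
  have hk' : ∀ v, T v y y v = c * g v y ^ 2 + k * g v v := fun v => by
    linear_combination hk v
  have hkc : k = -c * g y y := by
    by_cases hyy : g y y = 0
    · have := hk' u
      rw [hT.pair_symm, h y hyy, hg.eq y u] at this
      rw [hyy, mul_zero]
      exact (mul_eq_zero.mp (by linarith : k * g u u = 0)).resolve_right hu.ne'
    · have := hk' y
      rw [hT.apply_self_left] at this
      exact mul_right_cancel₀ hyy (by linear_combination -this)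
  rw [hk' x, hkc, hg.eq y x]
  ring

end IsCurvatureLike

end Curvature

/-- Lemma A: a curvature-like tensor vanishing on all weakly degenerate
2-planes of a nondegenerate indefinite space of dimension ≥ 3 is a constant multiple
of π₁. -/
theorem curvature_like_vanishing_on_weakly_degenerate_planes
    {V : Type*} [AddCommGroup V] [Module ℝ V] [FiniteDimensional ℝ V]
    (hdim : 3 ≤ Module.finrank ℝ V)
    (g : LinearMap.BilinForm ℝ V)
    (hsymm : ∀ x y : V, g x y = g y x)
    (hnondeg : ∀ v : V, (∀ w : V, g v w = 0) → v = 0)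
    (hindef : (∃ v : V, g v v > 0) ∧ (∃ w : V, g w w < 0))
    (T : V →ₗ[ℝ] V →ₗ[ℝ] V →ₗ[ℝ] V →ₗ[ℝ] ℝ)
    (hT1 : ∀ x y z u : V, T x y z u = -T y x z u)
    (hT2 : ∀ x y z u : V, T x y z u + T y z x u + T z x y u = 0)
    (hT3 : ∀ x y z u : V, T x y z u = -T x y u z)
    (hvan : ∀ x y : V, LinearIndependent ℝ ![x, y] →
      LinearMap.rank (g.compl₁₂ (Submodule.span ℝ {x, y}).subtype
        (Submodule.span ℝ {x, y}).subtype) = 1 →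
      T x y y x = 0) :
    ∃ c : ℝ, ∀ z u v w : V,
      T z u v w = c * (g z w * g u v - g z v * g u w) := by
  have hT : IsCurvatureLike T := ⟨hT1, hT2, hT3⟩
  have hg : g.IsSymm := ⟨hsymm⟩
  obtain ⟨⟨u, hu⟩, ⟨w, hw⟩⟩ := hindef
  obtain ⟨c, hc⟩ := hT.exists_forall_isotropic_apply_eq_mul_sq hdim hg hnondeg
    (fun x y h => hvan x y h.1 h.2) hu hw
  exact ⟨-c, hT.eq_of_sectional hg (hT.sectional_eq_of_isotropic hg hu hw hc)⟩
end

section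
/- Let V be a real vector space of dimension n ≥ 3 with a nondegenerate symmetric bilinear form g of indefinite signature, and let W be a real vector space with symmetric bilinear form ḡ. Let L : V → W be a linear isomorphism. Suppose there exists an isotropic vector ξ in V such that every isotropic vector sufficiently close to ξ is mapped by L to an isotropic vector of (W, ḡ). Then L is a homothety: there is a constant c such that ḡ(Lx, Ly) = c·g(x,y) for all x, y ∈ V. -/
lemma poly4_aux (A B C D E δ : ℝ) (hδ : 0 < δ)
    (h : ∀ t : ℝ, |t| < δ → A + B*t + C*t^2 + D*t^3 + E*t^4 = 0) :
    A = 0 ∧ B = 0 ∧ C = 0 ∧ D = 0 ∧ E = 0 := by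
  have h0 := h 0 (by simpa using hδ)
  have h1 := h (δ/2) (by rw [abs_of_pos (by linarith)]; linarith)
  have h2 := h (-(δ/2)) (by rw [abs_neg, abs_of_pos (by linarith)]; linarith)
  have h3 := h (δ/4) (by rw [abs_of_pos (by linarith)]; linarith)
  have h4 := h (-(δ/4)) (by rw [abs_neg, abs_of_pos (by linarith)]; linarith)
  have hA : A = 0 := by linarith
  have hδ4 : δ^4 ≠ 0 := by positivity
  have hδ3 : δ^3 ≠ 0 := by positivity
  have hδ2 : δ^2 ≠ 0 := by positivity
  have hE : E = 0 := by
    have key : E * (δ^4 * (3/64)) = 0 := by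
      linear_combination (1/2)*h1 + (1/2)*h2 - 2*h3 - 2*h4 + 3*h0
    rcases mul_eq_zero.mp key with h | h
    · exact h
    · exact absurd h (by positivity)
  have hC : C = 0 := by
    have key : C * (δ^2 * (1/4)) = 0 := by
      linear_combination (1/2)*h1 + (1/2)*h2 - h0 - (δ^4/16)*hE
    rcases mul_eq_zero.mp key with h | h
    · exact h
    · exact absurd h (by positivity)
  have hD : D = 0 := by
    have key : D * (δ^3 * (3/32)) = 0 := by
      linear_combination (1/2)*h1 - (1/2)*h2 - h3 + h4
    rcases mul_eq_zero.mp key with h | h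
    · exact h
    · exact absurd h (by positivity)
  have hB : B = 0 := by
    have key : B * (δ * (1/2)) = 0 := by
      linear_combination (1/2)*h1 - (1/2)*h2 - (δ^3/8)*hD
    rcases mul_eq_zero.mp key with h | h
    · exact h
    · exact absurd h (by positivity)
  exact ⟨hA, hB, hC, hD, hE⟩

/-- Lemma 4: if a linear isomorphism maps all isotropic vectors near some
isotropic vector ξ to isotropic vectors, it is a homothety. -/
theorem isotropic_preserving_near_vector_is_homothety
    {V W : Type*} [NormedAddCommGroup V] [NormedSpace ℝ V] [FiniteDimensional ℝ V]
    [AddCommGroup W] [Module ℝ W]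
    (hdim : 3 ≤ Module.finrank ℝ V)
    (g : LinearMap.BilinForm ℝ V)
    (hsymm : ∀ x y : V, g x y = g y x)
    (hnondeg : ∀ v : V, (∀ w : V, g v w = 0) → v = 0)
    (hindef : (∃ v : V, g v v > 0) ∧ (∃ w : V, g w w < 0))
    (gbar : LinearMap.BilinForm ℝ W)
    (hgbarsymm : ∀ x y : W, gbar x y = gbar y x)
    (L : V ≃ₗ[ℝ] W)
    (ξ : V) (hξne : ξ ≠ 0) (hξiso : g ξ ξ = 0)
    (U : Set V) (hU : U ∈ nhds ξ)
    (hmap : ∀ v ∈ U, v ≠ 0 → g v v = 0 → gbar (L v) (L v) = 0) :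
    ∃ c : ℝ, ∀ x y : V, gbar (L x) (L y) = c * g x y := by
  classical
  -- Step 1: hyperbolic partner w : g ξ w = 1, g w w = 0
  have hw0 : ∃ w0 : V, g ξ w0 ≠ 0 := by
    by_contra hcon
    push_neg at hcon
    exact hξne (hnondeg ξ hcon)
  obtain ⟨w0, hw0⟩ := hw0
  obtain ⟨w, hξw, hww⟩ : ∃ w : V, g ξ w = 1 ∧ g w w = 0 := by
    set w1 : V := (g ξ w0)⁻¹ • w0 with hw1def
    have hξw1 : g ξ w1 = 1 := by
      simp [hw1def, map_smul, smul_eq_mul]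
      field_simp
    refine ⟨w1 - (g w1 w1 / 2) • ξ, ?_, ?_⟩
    · simp [map_sub, map_smul, smul_eq_mul, hξw1, hξiso]
    · simp only [map_sub, map_smul, LinearMap.sub_apply, LinearMap.smul_apply,
        smul_eq_mul]
      rw [hsymm w1 ξ, hξw1, hξiso]
      ring
  -- Step 2: Y = ker (g ξ) ⊓ ker (g w) contains a non-isotropic vector y₀
  have hK1 : True := trivial
  have hrk : ∀ f : V →ₗ[ℝ] ℝ, Module.finrank ℝ V ≤ Module.finrank ℝ (LinearMap.ker f) + 1 := by
    intro f
    have := LinearMap.finrank_range_add_finrank_ker f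
    have h1 : Module.finrank ℝ (LinearMap.range f) ≤ 1 := by
      simpa using Submodule.finrank_le (LinearMap.range f)
    omega
  have hinf : 1 ≤ Module.finrank ℝ
      (LinearMap.ker (g ξ) ⊓ LinearMap.ker (g w) : Submodule ℝ V) := by
    have hsum := Submodule.finrank_sup_add_finrank_inf_eq
      (LinearMap.ker (g ξ)) (LinearMap.ker (g w))
    have hsup : Module.finrank ℝ
        (LinearMap.ker (g ξ) ⊔ LinearMap.ker (g w) : Submodule ℝ V) ≤ Module.finrank ℝ V :=
      Submodule.finrank_le _
    have e1 := hrk (g ξ)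
    have e2 := hrk (g w)
    omega
  obtain ⟨y1, hy1mem, hy1ne⟩ :
      ∃ y1 ∈ (LinearMap.ker (g ξ) ⊓ LinearMap.ker (g w) : Submodule ℝ V), y1 ≠ 0 := by
    apply Submodule.exists_mem_ne_zero_of_ne_bot
    intro hb
    rw [hb, finrank_bot] at hinf
    omega
  have hy1a : g ξ y1 = 0 := hy1mem.1
  have hy1b : g w y1 = 0 := hy1mem.2
  -- decomposition projector
  have hproj : ∀ v : V, g ξ (v - (g ξ v) • w - (g w v) • ξ) = 0 ∧
      g w (v - (g ξ v) • w - (g w v) • ξ) = 0 := by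
    intro v
    constructor
    · simp only [map_sub, map_smul, smul_eq_mul]
      rw [hξw, hξiso]; ring
    · simp only [map_sub, map_smul, smul_eq_mul]
      rw [hww, hsymm w ξ, hξw]; ring
  obtain ⟨y0, hy0a, hy0b, hy0ne⟩ :
      ∃ y0 : V, g ξ y0 = 0 ∧ g w y0 = 0 ∧ g y0 y0 ≠ 0 := by
    by_contra hcon
    push_neg at hcon
    -- all vectors in Y are isotropic ⇒ g vanishes on Y × Y
    have hYiso : ∀ y z : V, g ξ y = 0 → g w y = 0 → g ξ z = 0 → g w z = 0 →
        g y z = 0 := by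
      intro y z hya hyb hza hzb
      have h1 := hcon y hya hyb
      have h2 := hcon z hza hzb
      have h3 := hcon (y + z) (by rw [map_add, hya, hza]; ring)
        (by rw [map_add, hyb, hzb]; ring)
      simp only [map_add, LinearMap.add_apply] at h3
      rw [hsymm z y] at h3
      linarith
    have : y1 = 0 := by
      apply hnondeg
      intro v
      have hd := hproj v
      have hsplit : v = (v - (g ξ v) • w - (g w v) • ξ) + (g ξ v) • w + (g w v) • ξ := by
        abel
      calc g y1 v = g y1 ((v - (g ξ v) • w - (g w v) • ξ) + (g ξ v) • w + (g w v) • ξ) := by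
            rw [← hsplit]
        _ = 0 := by
            simp only [map_add, map_smul, smul_eq_mul]
            rw [hYiso y1 _ hy1a hy1b hd.1 hd.2, hsymm y1 w, hy1b, hsymm y1 ξ, hy1a]
            ring
    exact hy1ne this
  -- Step 3: key identities from the isotropic family ξ + t•y - (t²g(y,y)/2)•w
  have key : ∀ y : V, g ξ y = 0 → g w y = 0 →
      gbar (L ξ) (L ξ) = 0 ∧ gbar (L ξ) (L y) = 0 ∧
      gbar (L y) (L y) = g y y * gbar (L ξ) (L w) ∧
      g y y * gbar (L y) (L w) = 0 ∧
      (g y y)^2 * gbar (L w) (L w) = 0 := by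
    intro y hy1 hy2
    set v : ℝ → V := fun t => ξ + t • y - ((t^2 * g y y)/2) • w with hvdef
    have hs1 : g y ξ = 0 := (hsymm y ξ).trans hy1
    have hs2 : g w ξ = 1 := (hsymm w ξ).trans hξw
    have hs3 : g y w = 0 := (hsymm y w).trans hy2
    have hviso : ∀ t : ℝ, g (v t) (v t) = 0 := by
      intro t
      simp only [hvdef, map_add, map_sub, map_smul, LinearMap.add_apply,
        LinearMap.sub_apply, LinearMap.smul_apply, smul_eq_mul,
        hξiso, hξw, hww, hy1, hy2, hs1, hs2, hs3]
      ring
    have hvw : ∀ t : ℝ, g (v t) w = 1 := by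
      intro t
      simp only [hvdef, map_add, map_sub, map_smul, LinearMap.add_apply,
        LinearMap.sub_apply, LinearMap.smul_apply, smul_eq_mul,
        hξw, hww, hs3]
      ring
    have hvne : ∀ t : ℝ, v t ≠ 0 := by
      intro t h
      have h1 := hvw t
      rw [h] at h1
      simp at h1
    have hcontv : Continuous v := by
      apply Continuous.sub
      · exact continuous_const.add ((continuous_id.smul continuous_const))
      · exact (Continuous.div_const (continuous_pow 2 |>.mul continuous_const) 2).smul
          continuous_const
    have htend : Filter.Tendsto v (nhds 0) (nhds ξ) := by
      have h0 : v 0 = ξ := by simp [hvdef]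
      simpa [h0] using hcontv.tendsto 0
    have hpre : v ⁻¹' U ∈ nhds (0 : ℝ) := htend hU
    obtain ⟨δ, hδpos, hball⟩ := Metric.mem_nhds_iff.mp hpre
    have hz : ∀ t : ℝ, |t| < δ → gbar (L (v t)) (L (v t)) = 0 := by
      intro t ht
      have hmem : v t ∈ U := hball (by simpa [Real.dist_eq] using ht)
      exact hmap (v t) hmem (hvne t) (hviso t)
    have hexp : ∀ t : ℝ, |t| < δ →
        (gbar (L ξ) (L ξ)) + (2 * gbar (L ξ) (L y)) * t +
        (gbar (L y) (L y) - g y y * gbar (L ξ) (L w)) * t^2 +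
        (-(g y y) * gbar (L y) (L w)) * t^3 +
        ((g y y)^2/4 * gbar (L w) (L w)) * t^4 = 0 := by
      intro t ht
      have h1 := hz t ht
      simp only [hvdef, map_add, map_sub, map_smul, LinearMap.add_apply,
        LinearMap.sub_apply, LinearMap.smul_apply, smul_eq_mul,
        hgbarsymm (L y) (L ξ), hgbarsymm (L w) (L ξ), hgbarsymm (L w) (L y)] at h1
      linear_combination h1
    obtain ⟨hA, hB, hC, hD, hE⟩ := poly4_aux _ _ _ _ _ δ hδpos hexp
    refine ⟨hA, by linarith, by linarith, by linarith, by linarith⟩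
  -- Step 4: assemble
  obtain ⟨c, hcdef⟩ : ∃ c : ℝ, c = gbar (L ξ) (L w) := ⟨_, rfl⟩
  obtain ⟨hξξ, hξy0, hy0y0, hy0w4, hww5⟩ := key y0 hy0a hy0b
  have hLww : gbar (L w) (L w) = 0 := by
    have hne : (g y0 y0)^2 ≠ 0 := pow_ne_zero 2 hy0ne
    rcases mul_eq_zero.mp hww5 with h | h
    · exact absurd h hne
    · exact h
  have hLy0w : gbar (L y0) (L w) = 0 := by
    rcases mul_eq_zero.mp hy0w4 with h | h
    · exact absurd h hy0ne
    · exact h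
  -- F2 / F3 for all y in Y
  have F2 : ∀ y : V, g ξ y = 0 → g w y = 0 → gbar (L ξ) (L y) = 0 :=
    fun y h1 h2 => (key y h1 h2).2.1
  have F3 : ∀ y : V, g ξ y = 0 → g w y = 0 → gbar (L y) (L y) = g y y * c :=
    fun y h1 h2 => by rw [(key y h1 h2).2.2.1, ← hcdef]
  -- F6 : gbar (L y) (L w) = 0 for all y in Y
  have F6 : ∀ y : V, g ξ y = 0 → g w y = 0 → gbar (L y) (L w) = 0 := by
    intro y h1 h2
    rcases eq_or_ne (g y y) 0 with hyy | hyy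
    · -- perturb by y0
      have hexpand : ∀ ε : ℝ, g (y + ε • y0) (y + ε • y0) =
          2 * ε * g y y0 + ε^2 * g y0 y0 := by
        intro ε
        simp only [map_add, map_smul, LinearMap.add_apply, LinearMap.smul_apply,
          smul_eq_mul]
        rw [hsymm y0 y, hyy]
        ring
      obtain ⟨ε, hqne⟩ : ∃ ε : ℝ, g (y + ε • y0) (y + ε • y0) ≠ 0 := by
        by_cases hca : g y0 y0 + 2 * g y y0 = 0
        · refine ⟨-1, ?_⟩
          rw [hexpand]
          intro h0
          apply hy0ne
          linarith [h0, hca]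
        · refine ⟨1, ?_⟩
          rw [hexpand]
          intro h0
          apply hca
          linarith [h0]
      have hmem1 : g ξ (y + ε • y0) = 0 := by
        simp only [map_add, map_smul, smul_eq_mul, h1, hy0a]; ring
      have hmem2 : g w (y + ε • y0) = 0 := by
        simp only [map_add, map_smul, smul_eq_mul, h2, hy0b]; ring
      have h4 := (key (y + ε • y0) hmem1 hmem2).2.2.2.1
      rcases mul_eq_zero.mp h4 with h | h
      · exact absurd h hqne
      · simp only [map_add, map_smul, LinearMap.add_apply, LinearMap.smul_apply,
          smul_eq_mul, hLy0w] at h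
        linarith
    · have h4 := (key y h1 h2).2.2.2.1
      rcases mul_eq_zero.mp h4 with h | h
      · exact absurd h hyy
      · exact h
  -- F7 : polarization on Y
  have F7 : ∀ y z : V, g ξ y = 0 → g w y = 0 → g ξ z = 0 → g w z = 0 →
      gbar (L y) (L z) = c * g y z := by
    intro y z hya hyb hza hzb
    have h1 := F3 y hya hyb
    have h2 := F3 z hza hzb
    have h3 := F3 (y + z) (by rw [map_add, hya, hza]; ring)
      (by rw [map_add, hyb, hzb]; ring)
    simp only [map_add, LinearMap.add_apply] at h3
    rw [hgbarsymm (L z) (L y), hsymm z y] at h3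
    linarith
  -- Step 5: conclude
  refine ⟨c, fun x x' => ?_⟩
  obtain ⟨hpx1, hpx2⟩ := hproj x
  obtain ⟨hpx1', hpx2'⟩ := hproj x'
  set p : V := x - (g ξ x) • w - (g w x) • ξ with hpdef
  set p' : V := x' - (g ξ x') • w - (g w x') • ξ with hpdef'
  have hx : x = (g w x) • ξ + (g ξ x) • w + p := by rw [hpdef]; abel
  have hx' : x' = (g w x') • ξ + (g ξ x') • w + p' := by rw [hpdef']; abel
  have e1 : gbar (L ξ) (L p') = 0 := F2 p' hpx1' hpx2'
  have e3 : gbar (L p) (L ξ) = 0 := by rw [hgbarsymm]; exact F2 p hpx1 hpx2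
  have e4 : gbar (L p) (L w) = 0 := F6 p hpx1 hpx2
  have e5 : gbar (L w) (L p') = 0 := by
    rw [hgbarsymm]; exact F6 p' hpx1' hpx2'
  have e6 : gbar (L p) (L p') = c * g p p' := F7 p p' hpx1 hpx2 hpx1' hpx2'
  have e7 : gbar (L w) (L ξ) = c := by rw [hgbarsymm (L w) (L ξ), hcdef]
  have hgside : g x x' = (g w x) * (g ξ x') + (g ξ x) * (g w x') + g p p' := by
    conv_lhs => rw [hx, hx']
    simp only [map_add, map_smul, LinearMap.add_apply, LinearMap.smul_apply,
      smul_eq_mul, hξiso, hξw, hww, hpx1, hpx2, hpx1', hpx2',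
      (hsymm w ξ).trans hξw, (hsymm p ξ).trans hpx1, (hsymm p w).trans hpx2]
    ring
  conv_lhs => rw [hx, hx']
  simp only [map_add, map_smul, LinearMap.add_apply, LinearMap.smul_apply,
    smul_eq_mul, hξξ, hLww, e1, e3, e4, e5, e6, e7, ← hcdef]
  rw [hgside]
  ring
end
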